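/- For a locally integrable function f : (0,Z) → ℝ define (𝔇^{−2}f)(z) := z^{−2/3} ∫₀^z ( ∫₀^{w} t^{−2/3} f(t) dt ) dw, and inductively 𝔇^{−2m} := 𝔇^{−2} ∘ 𝔇^{−2(m−1)} for m ≥ 2. For every integer m ≥ 1 there exists a constant C = C(m) > 0 such that for every Z > 0, every measurable f : (0,Z) → ℝ with ∫₀^Z f(t)² t^{−2/3} dt < ∞, and every z ∈ (0,Z]: |𝔇^{−2m} f(z)| ≤ C · z^{2m/3 − 1/6} · ( ∫₀^Z f(t)² t^{−2/3} dt )^{1/2}. -/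

import Mathlib

open MeasureTheory

/-- The right inverse `𝔇⁻²` of the weighted operator `𝔇²`, normalized so that
`𝔇⁻²f(0) = 0`. -/
noncomputable def Dinv2 (f : ℝ → ℝ) : ℝ → ℝ := fun z =>
  z ^ (-(2:ℝ)/3) * ∫ w in (0:ℝ)..z, (∫ t in (0:ℝ)..w, t ^ (-(2:ℝ)/3) * f t)

/-- Iterated inverse: `𝔇⁻²ᵐ = 𝔇⁻² ∘ 𝔇⁻²⁽ᵐ⁻¹⁾`, with `𝔇⁰ = id`. -/
noncomputable def DinvIter : ℕ → (ℝ → ℝ) → ℝ → ℝ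
  | 0 => fun f => f
  | m + 1 => fun f => Dinv2 (DinvIter m f)

/-!
Cauchy–Schwarz against the weight `t^{-2/3}` bounds the inner primitive `∫₀^w t^{-2/3} f` by
`√3 ‖f‖ w^{1/6}`, where `‖f‖² = ∫₀^Z f² t^{-2/3}`. Integrating a power bound twice shows that
`𝔇⁻²` maps a pointwise bound `B t^a` (`a > -1/3`) to `B / ((a + 1/3)(a + 4/3)) · z^{a + 2/3}`, so
induction on `m` raises the exponent `1/6` of the primitive to `2m/3 - 1/6`. Since these bounds
are pointwise and dominate the integrands by integrable powers, no measurability of the iterates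
is needed: a non-integrable integrand would have integral `0`.
-/

open Set Real

section CauchySchwarz

variable {α : Type*} [MeasurableSpace α] {μ : Measure α} {φ f : α → ℝ}

theorem integrable_mul_of_integrable_sq_mul (hφ0 : 0 ≤ᵐ[μ] φ) (hφ : Integrable φ μ)
    (hf : AEStronglyMeasurable f μ) (hf2 : Integrable (fun x => f x ^ 2 * φ x) μ) :
    Integrable (fun x => φ x * f x) μ := by
  have hbound : Integrable (fun x => (φ x + f x ^ 2 * φ x) / 2) μ := (hφ.add hf2).div_const 2
  refine hbound.mono' (hφ.aestronglyMeasurable.mul hf) ?_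
  filter_upwards [hφ0] with x (hx : 0 ≤ φ x)
  rw [Real.norm_eq_abs, abs_mul, abs_of_nonneg hx]
  nlinarith [mul_nonneg hx (sq_nonneg (|f x| - 1)), sq_abs (f x)]

theorem sq_integral_mul_le_integral_mul_integral_sq_mul (hφ0 : 0 ≤ᵐ[μ] φ)
    (hφ : Integrable φ μ) (hf : AEStronglyMeasurable f μ)
    (hf2 : Integrable (fun x => f x ^ 2 * φ x) μ) :
    (∫ x, φ x * f x ∂μ) ^ 2 ≤ (∫ x, φ x ∂μ) * ∫ x, f x ^ 2 * φ x ∂μ := by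
  have hφf := integrable_mul_of_integrable_sq_mul hφ0 hφ hf hf2
  have hquad : ∀ s : ℝ, 0 ≤ (∫ x, φ x ∂μ) * (s * s) + 2 * (∫ x, φ x * f x ∂μ) * s +
      ∫ x, f x ^ 2 * φ x ∂μ := by
    intro s
    have hexpand : (fun x => (f x + s) ^ 2 * φ x) =
        fun x => s * s * φ x + 2 * s * (φ x * f x) + f x ^ 2 * φ x := by
      ext x; ring
    calc 0 ≤ ∫ x, (f x + s) ^ 2 * φ x ∂μ := integral_nonneg_of_ae <| by
          filter_upwards [hφ0] with x hx using mul_nonneg (sq_nonneg _) hx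
      _ = _ := by
          have hlin : Integrable (fun x => s * s * φ x + 2 * s * (φ x * f x)) μ :=
            (hφ.const_mul _).add (hφf.const_mul _)
          rw [hexpand, integral_add hlin hf2,
            integral_add (hφ.const_mul _) (hφf.const_mul _), integral_const_mul,
            integral_const_mul]
          ring
  have := discrim_le_zero hquad
  rw [discrim] at this
  linarith

end CauchySchwarz

theorem abs_intervalIntegral_weight_mul_le {f : ℝ → ℝ} {Z w : ℝ} (hf : Measurable f)
    (hf2 : IntegrableOn (fun t => f t ^ 2 * t ^ (-(2:ℝ)/3)) (Ioo 0 Z)) (hw : w ∈ Ioc 0 Z) :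
    |∫ t in 0..w, t ^ (-(2:ℝ)/3) * f t| ≤
      √3 * √(∫ t in Ioo 0 Z, f t ^ 2 * t ^ (-(2:ℝ)/3)) * w ^ (1/6 : ℝ) := by
  have hφ : IntegrableOn (fun t : ℝ => t ^ (-(2:ℝ)/3)) (Ioc 0 w) :=
    (intervalIntegral.intervalIntegrable_rpow' (by norm_num)).1
  have hf2' : IntegrableOn (fun t => f t ^ 2 * t ^ (-(2:ℝ)/3)) (Ioc 0 Z) := by
    rwa [integrableOn_Ioc_iff_integrableOn_Ioo]
  have hφ_int : ∫ t in Ioc 0 w, t ^ (-(2:ℝ)/3) = 3 * w ^ (1/3 : ℝ) := by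
    rw [← intervalIntegral.integral_of_le hw.1.le, integral_rpow (by norm_num),
      zero_rpow (by norm_num)]
    norm_num
    ring
  have hf2_int : ∫ t in Ioc 0 w, f t ^ 2 * t ^ (-(2:ℝ)/3) ≤
      ∫ t in Ioo 0 Z, f t ^ 2 * t ^ (-(2:ℝ)/3) := by
    rw [← integral_Ioc_eq_integral_Ioo]
    refine setIntegral_mono_set hf2' ?_ (Ioc_subset_Ioc_right hw.2).eventuallyLE
    exact ae_restrict_of_forall_mem measurableSet_Ioc fun t ht =>
      mul_nonneg (sq_nonneg _) (rpow_nonneg ht.1.le _)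
  have hcs := sq_integral_mul_le_integral_mul_integral_sq_mul
    (ae_restrict_of_forall_mem measurableSet_Ioc fun t (ht : t ∈ Ioc 0 w) =>
      rpow_nonneg ht.1.le _)
    hφ hf.aestronglyMeasurable (hf2'.mono_set (Ioc_subset_Ioc_right hw.2))
  rw [hφ_int] at hcs
  rw [intervalIntegral.integral_of_le hw.1.le]
  calc |∫ t in Ioc 0 w, t ^ (-(2:ℝ)/3) * f t|
      ≤ √(3 * w ^ (1/3 : ℝ)) * √(∫ t in Ioc 0 w, f t ^ 2 * t ^ (-(2:ℝ)/3)) := by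
        rw [← sqrt_mul (mul_nonneg zero_le_three (rpow_nonneg hw.1.le _))]
        exact abs_le_sqrt hcs
    _ ≤ √(3 * w ^ (1/3 : ℝ)) * √(∫ t in Ioo 0 Z, f t ^ 2 * t ^ (-(2:ℝ)/3)) := by
        gcongr
    _ = √3 * √(∫ t in Ioo 0 Z, f t ^ 2 * t ^ (-(2:ℝ)/3)) * w ^ (1/6 : ℝ) := by
        rw [sqrt_mul (by norm_num), sqrt_eq_rpow, sqrt_eq_rpow, ← rpow_mul hw.1.le]
        ring_nf

theorem abs_intervalIntegral_le_of_abs_le_rpow {g : ℝ → ℝ} {D b w : ℝ} (hb : -1 < b)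
    (hw : 0 ≤ w) (h : ∀ t ∈ Ioc 0 w, |g t| ≤ D * t ^ b) :
    |∫ t in 0..w, g t| ≤ D / (b + 1) * w ^ (b + 1) := by
  rw [← Real.norm_eq_abs]
  calc ‖∫ t in 0..w, g t‖ ≤ ∫ t in 0..w, D * t ^ b :=
        intervalIntegral.norm_integral_le_of_norm_le hw (ae_of_all _ h)
          ((intervalIntegral.intervalIntegrable_rpow' hb).const_mul D)
    _ = D / (b + 1) * w ^ (b + 1) := by
        rw [intervalIntegral.integral_const_mul, integral_rpow (Or.inl hb),
          zero_rpow (by linarith)]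
        ring

theorem abs_Dinv2_le {g : ℝ → ℝ} {D b z : ℝ} (hb : -1 < b) (hz : 0 < z)
    (h : ∀ w ∈ Ioc 0 z, |∫ t in 0..w, t ^ (-(2:ℝ)/3) * g t| ≤ D * w ^ b) :
    |Dinv2 g z| ≤ D / (b + 1) * z ^ (b + 1/3) := by
  have hpow : 0 ≤ z ^ (-(2:ℝ)/3) := rpow_nonneg hz.le _
  calc |Dinv2 g z| = z ^ (-(2:ℝ)/3) * |∫ w in 0..z, ∫ t in 0..w, t ^ (-(2:ℝ)/3) * g t| := by
        rw [Dinv2, abs_mul, abs_of_nonneg hpow]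
    _ ≤ z ^ (-(2:ℝ)/3) * (D / (b + 1) * z ^ (b + 1)) :=
        mul_le_mul_of_nonneg_left (abs_intervalIntegral_le_of_abs_le_rpow hb hz.le h) hpow
    _ = D / (b + 1) * z ^ (b + 1/3) := by
        rw [mul_left_comm, ← rpow_add hz]
        ring_nf

theorem abs_Dinv2_le_of_abs_le_rpow {g : ℝ → ℝ} {B a z : ℝ} (ha : -1/3 < a) (hz : 0 < z)
    (h : ∀ t ∈ Ioc 0 z, |g t| ≤ B * t ^ a) :
    |Dinv2 g z| ≤ B / ((a + 1/3) * (a + 4/3)) * z ^ (a + 2/3) := by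
  have hprim : ∀ w ∈ Ioc 0 z,
      |∫ t in 0..w, t ^ (-(2:ℝ)/3) * g t| ≤ B / (a + 1/3) * w ^ (a + 1/3) := by
    intro w hw
    have := abs_intervalIntegral_le_of_abs_le_rpow (g := fun t => t ^ (-(2:ℝ)/3) * g t)
      (D := B) (b := a - 2/3) (by linarith) hw.1.le fun t ht => ?_
    · convert this using 3 <;> ring
    · rw [abs_mul, abs_of_nonneg (rpow_nonneg ht.1.le _), sub_eq_neg_add, rpow_add ht.1,
        mul_left_comm, neg_div]
      exact mul_le_mul_of_nonneg_left (h t ⟨ht.1, ht.2.trans hw.2⟩) (rpow_nonneg ht.1.le _)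
  have := abs_Dinv2_le (by linarith) hz hprim
  rw [div_div] at this
  convert this using 3 <;> ring

theorem exists_abs_DinvIter_succ_le (m : ℕ) :
    ∃ C > (0:ℝ), ∀ (g : ℝ → ℝ) (A z : ℝ), 0 < z →
      (∀ w ∈ Ioc 0 z, |∫ t in 0..w, t ^ (-(2:ℝ)/3) * g t| ≤ A * w ^ (1/6 : ℝ)) →
      |DinvIter (m + 1) g z| ≤ C * A * z ^ (2 * ((m + 1 : ℕ) : ℝ)/3 - 1/6) := by
  induction m with
  | zero =>
    refine ⟨6/7, by norm_num, fun g A z hz h => ?_⟩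
    show |Dinv2 g z| ≤ _
    convert abs_Dinv2_le (by norm_num) hz h using 2
    · ring
    · norm_num
  | succ m ih =>
    obtain ⟨C, hC, hbound⟩ := ih
    set a : ℝ := 2 * ((m + 1 : ℕ) : ℝ)/3 - 1/6 with ha
    have ha_pos : 0 < a + 1/3 := by
      rw [ha]; push_cast; linarith [(Nat.cast_nonneg m : (0:ℝ) ≤ m)]
    refine ⟨C / ((a + 1/3) * (a + 4/3)), div_pos hC (mul_pos ha_pos (by linarith)),
      fun g A z hz h => ?_⟩
    have := abs_Dinv2_le_of_abs_le_rpow (B := C * A) (by linarith) hz fun t ht =>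
      hbound g A t ht.1 fun w hw => h w ⟨hw.1, hw.2.trans ht.2⟩
    show |Dinv2 (DinvIter (m + 1) g) z| ≤ _
    convert this using 2
    · ring
    · rw [ha]; push_cast; ring_nf

/-- Pointwise bound for the iterated inverse operator. -/
theorem inverse_operator_bound (m : ℕ) (hm : 1 ≤ m) :
    ∃ C > (0:ℝ), ∀ Z : ℝ, 0 < Z → ∀ f : ℝ → ℝ, Measurable f →
      IntegrableOn (fun t => (f t) ^ 2 * t ^ (-(2:ℝ)/3)) (Set.Ioo 0 Z) →
      ∀ z ∈ Set.Ioc (0:ℝ) Z,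
        |DinvIter m f z| ≤
          C * z ^ (2 * (m:ℝ)/3 - 1/6) *
            Real.sqrt (∫ t in Set.Ioo (0:ℝ) Z, (f t) ^ 2 * t ^ (-(2:ℝ)/3)) := by
  obtain ⟨k, rfl⟩ := Nat.exists_eq_add_of_le' hm
  obtain ⟨C, hC, hbound⟩ := exists_abs_DinvIter_succ_le k
  refine ⟨C * √3, by positivity, fun Z _ f hf hf2 z hz => ?_⟩
  calc |DinvIter (k + 1) f z|
      ≤ C * (√3 * √(∫ t in Ioo 0 Z, f t ^ 2 * t ^ (-(2:ℝ)/3))) *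
          z ^ (2 * ((k + 1 : ℕ) : ℝ)/3 - 1/6) :=
        hbound f _ z hz.1 fun w hw =>
          abs_intervalIntegral_weight_mul_le hf hf2 ⟨hw.1, hw.2.trans hz.2⟩
    _ = _ := by ring
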